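/- arXiv:2407.00762 — 2 statements merged into one kernel-verified Lean document; each statement's English description precedes it below -/
import Mathlib

section
/- For the multi-attacker feasible set A = { (p₁,…,p_m) : ‖p_j − a_j‖/ν_j ≤ Σ_{k=1}^{j} ‖p_k − p_{k−1}‖ for all j ≤ m }, with p₀ = d and all ν_j ∈ (0,1): A is bounded. Concretely, if ‖(p₁,…,p_m)‖ → ∞ along feasible points this leads to a contradiction; equivalently there exists R > 0 (depending on a₁,…,a_m, d, ν₁,…,ν_m) such that every feasible tuple satisfies ‖p_j‖ ≤ R for all j. -/
/-!
Write `T_j` for the length of the defender's polygonal path `d, p₁, …, p_j`. Feasibility says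
`‖p_j - a_j‖ ≤ ν_j T_j`, and `T_j = T_{j-1} + ‖p_j - p_{j-1}‖` with `p₀ = d`. Routing the last leg through `a_j`
and using `‖p_{j-1} - d‖ ≤ T_{j-1}` gives `(1 - ν_j) ‖p_j - p_{j-1}‖ ≤ 2 T_{j-1} + ‖a_j‖ + ‖d‖`,
so, as `ν_j < 1`, every `T_j` is bounded by induction on `j`, and `‖p_j‖ ≤ ‖a_j‖ + T_j`.
-/

noncomputable def waypoint {n m : ℕ} (d : EuclideanSpace ℝ (Fin n))
    (p : Fin m → EuclideanSpace ℝ (Fin n)) : ℕ → EuclideanSpace ℝ (Fin n)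
  | 0 => d
  | (i + 1) => if h : i < m then p ⟨i, h⟩ else 0

noncomputable def defenderTime {n m : ℕ} (d : EuclideanSpace ℝ (Fin n))
    (p : Fin m → EuclideanSpace ℝ (Fin n)) (j : ℕ) : ℝ :=
  ∑ k ∈ Finset.range (j + 1), ‖waypoint d p (k + 1) - waypoint d p k‖

open Finset

section PathLength

variable {E : Type*} [SeminormedAddCommGroup E]

noncomputable def pathLength (w : ℕ → E) (n : ℕ) : ℝ :=
  ∑ k ∈ range n, ‖w (k + 1) - w k‖

theorem pathLength_succ (w : ℕ → E) (n : ℕ) :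
    pathLength w (n + 1) = pathLength w n + ‖w (n + 1) - w n‖ :=
  sum_range_succ _ _

theorem pathLength_nonneg (w : ℕ → E) (n : ℕ) : 0 ≤ pathLength w n :=
  sum_nonneg fun _ _ => norm_nonneg _

theorem pathLength_mono (w : ℕ → E) : Monotone (pathLength w) := fun _ _ hmn =>
  sum_le_sum_of_subset_of_nonneg (range_subset_range.2 hmn) fun _ _ _ => norm_nonneg _

theorem norm_sub_le_pathLength (w : ℕ → E) (n : ℕ) : ‖w n - w 0‖ ≤ pathLength w n := by
  rw [← sum_range_sub]
  exact norm_sum_le _ _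

theorem one_sub_mul_norm_sub_le {x y b d : E} {θ L : ℝ} (hθ : θ < 1) (hL : ‖x - d‖ ≤ L)
    (hy : ‖y - b‖ ≤ θ * (L + ‖y - x‖)) :
    (1 - θ) * ‖y - x‖ ≤ 2 * L + ‖b‖ + ‖d‖ := by
  have hθL : θ * L ≤ L := mul_le_of_le_one_left ((norm_nonneg _).trans hL) hθ.le
  have hyx : ‖y - x‖ ≤ ‖y - b‖ + ‖b - x‖ := norm_sub_le_norm_sub_add_norm_sub _ _ _
  have hbx : ‖b - x‖ ≤ ‖b‖ + ‖x - d‖ + ‖d‖ := by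
    calc ‖b - x‖ ≤ ‖b‖ + ‖x‖ := norm_sub_le _ _
      _ ≤ ‖b‖ + (‖x - d‖ + ‖d‖) := by gcongr; exact norm_le_norm_sub_add _ _
      _ = ‖b‖ + ‖x - d‖ + ‖d‖ := by ring
  linarith

theorem exists_pathLength_le (d : E) (b : ℕ → E) (θ : ℕ → ℝ) (N : ℕ)
    (hθ : ∀ i < N, θ i < 1) :
    ∃ B, ∀ w : ℕ → E, w 0 = d →
      (∀ i < N, ‖w (i + 1) - b i‖ ≤ θ i * pathLength w (i + 1)) → pathLength w N ≤ B := by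
  induction N with
  | zero => exact ⟨0, fun w _ _ => by simp [pathLength]⟩
  | succ N ih =>
    obtain ⟨B, hB⟩ := ih fun i hi => hθ i (by omega)
    have hθN : 0 < 1 - θ N := sub_pos.2 (hθ N N.lt_succ_self)
    refine ⟨B + (2 * B + ‖b N‖ + ‖d‖) / (1 - θ N), fun w hw₀ hw => ?_⟩
    have hLB : pathLength w N ≤ B := hB w hw₀ fun i hi => hw i (by omega)
    have hleg : (1 - θ N) * ‖w (N + 1) - w N‖ ≤ 2 * pathLength w N + ‖b N‖ + ‖d‖ :=
      one_sub_mul_norm_sub_le (hθ N N.lt_succ_self) (hw₀ ▸ norm_sub_le_pathLength w N)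
        (pathLength_succ w N ▸ hw N N.lt_succ_self)
    have hleg' : ‖w (N + 1) - w N‖ ≤ (2 * B + ‖b N‖ + ‖d‖) / (1 - θ N) := by
      rw [le_div_iff₀ hθN]
      linarith
    rw [pathLength_succ]
    linarith

end PathLength

theorem defenderTime_eq_pathLength {n m : ℕ} (d : EuclideanSpace ℝ (Fin n))
    (p : Fin m → EuclideanSpace ℝ (Fin n)) (j : ℕ) :
    defenderTime d p j = pathLength (waypoint d p) (j + 1) :=
  rfl

theorem waypoint_succ {n m : ℕ} (d : EuclideanSpace ℝ (Fin n))
    (p : Fin m → EuclideanSpace ℝ (Fin n)) (j : Fin m) :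
    waypoint d p (j + 1) = p j :=
  dif_pos j.2

theorem multi_attacker_feasible_set_bounded
    (n m : ℕ) (a : Fin m → EuclideanSpace ℝ (Fin n))
    (ν : Fin m → ℝ) (hν : ∀ i, ν i ∈ Set.Ioo (0:ℝ) 1)
    (d : EuclideanSpace ℝ (Fin n)) :
    ∃ R : ℝ, 0 < R ∧
      ∀ p : Fin m → EuclideanSpace ℝ (Fin n),
        (∀ j : Fin m, ‖p j - a j‖ / ν j - defenderTime d p j ≤ 0) →
        ∀ j : Fin m, ‖p j‖ ≤ R := by
  -- `a` and `ν` extended to `ℕ` arbitrarily; only the indices `i < m` are constrained.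
  obtain ⟨B, hB⟩ := exists_pathLength_le d
    (fun i => if h : i < m then a ⟨i, h⟩ else 0) (fun i => if h : i < m then ν ⟨i, h⟩ else 0) m
    fun i hi => by simpa [hi] using (hν _).2
  refine ⟨∑ j, ‖a j‖ + |B| + 1, by positivity, fun p hp j => ?_⟩
  have hfeas : ∀ j : Fin m, ‖p j - a j‖ ≤ ν j * defenderTime d p j := fun j => by
    have h := hp j
    rwa [sub_nonpos, div_le_iff₀ (hν j).1, mul_comm] at h
  have hT : defenderTime d p j ≤ B := by
    rw [defenderTime_eq_pathLength]
    refine (pathLength_mono _ (Nat.succ_le_of_lt j.2)).trans (hB _ rfl fun i hi => ?_)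
    simpa [hi, ← defenderTime_eq_pathLength, ← waypoint_succ d p ⟨i, hi⟩] using hfeas ⟨i, hi⟩
  have hνT : ν j * defenderTime d p j ≤ defenderTime d p j :=
    mul_le_of_le_one_left (pathLength_nonneg _ _) (hν j).2.le
  calc ‖p j‖ ≤ ‖a j‖ + ‖p j - a j‖ := norm_le_norm_add_norm_sub' _ _
    _ ≤ ∑ j, ‖a j‖ + |B| := by
      gcongr
      · exact single_le_sum (fun _ _ => norm_nonneg _) (mem_univ j)
      · linarith [hfeas j, le_abs_self B]
    _ ≤ ∑ j, ‖a j‖ + |B| + 1 := le_add_of_nonneg_right zero_le_one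
end

section
/- The multi-attacker feasible set A = { (p₁, p₂) ∈ ℝ² × ℝ² : ‖p₁ − a₁‖/ν₁ ≤ ‖p₁ − d‖ and ‖p₂ − a₂‖/ν₂ ≤ ‖p₁ − d‖ + ‖p₂ − p₁‖ } need not be convex: there exist a₁, a₂, d ∈ ℝ² and ν₁, ν₂ ∈ (0,1) and points P, Q ∈ A such that (P+Q)/2 ∉ A. -/
/-!
Take the defender at the origin and the second attacker's position `p₂` at the origin too. The
second constraint then reads `‖a₂‖ / ν₂ ≤ 2 ‖p₁‖`: it asks `p₁` to lie *outside* a ball, which is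
not a convex condition. The points `(4, ±3)` lie on the circle of radius `5` around the origin,
outside the ball of radius `‖a₂‖ / (2 ν₂) = 9/2`, while their midpoint `(4, 0)` lies inside it;
all three points also satisfy the first constraint for `a₁ = (4, 0)` and `ν₁ = 3/4`.
-/

def MultiAttackerFeasible {E : Type*} [SeminormedAddCommGroup E] (a₁ a₂ d : E) (ν₁ ν₂ : ℝ)
    (p : E × E) : Prop :=
  ‖p.1 - a₁‖ / ν₁ ≤ ‖p.1 - d‖ ∧ ‖p.2 - a₂‖ / ν₂ ≤ ‖p.1 - d‖ + ‖p.2 - p.1‖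

theorem multiAttackerFeasible_mk_zero_iff {E : Type*} [SeminormedAddCommGroup E]
    {a₁ a₂ x : E} {ν₁ ν₂ : ℝ} :
    MultiAttackerFeasible a₁ a₂ 0 ν₁ ν₂ (x, 0) ↔ ‖x - a₁‖ / ν₁ ≤ ‖x‖ ∧ ‖a₂‖ / ν₂ ≤ 2 * ‖x‖ := by
  simp only [MultiAttackerFeasible, sub_zero, zero_sub, norm_neg, two_mul]

theorem EuclideanSpace.norm_vec2_eq {x y r : ℝ} (hr : 0 ≤ r) (h : x ^ 2 + y ^ 2 = r ^ 2) :
    ‖!₂[x, y]‖ = r := by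
  rw [EuclideanSpace.norm_eq, Real.sqrt_eq_iff_eq_sq (by positivity) hr]
  simpa [Fin.sum_univ_two] using h

local notation "ℝ²" => EuclideanSpace ℝ (Fin 2)

theorem multiAttackerFeasible_of_sq_eq_nine {y : ℝ} (hy : y ^ 2 = 9) :
    MultiAttackerFeasible (!₂[4, 0] : ℝ²) !₂[9/2, 0] 0 (3/4) (1/2) (!₂[4, y], 0) := by
  have hdiff : (!₂[4, y] : ℝ²) - !₂[4, 0] = !₂[0, y] := by
    simp only [← WithLp.toLp_sub, Matrix.cons_sub_cons, sub_self, sub_zero, Matrix.zero_empty]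
  rw [multiAttackerFeasible_mk_zero_iff, hdiff, EuclideanSpace.norm_vec2_eq (r := 3) (by norm_num)
    (by linarith), EuclideanSpace.norm_vec2_eq (r := 5) (by norm_num) (by linarith),
    EuclideanSpace.norm_vec2_eq (r := 9/2) (by norm_num) (by norm_num)]
  norm_num

theorem not_multiAttackerFeasible_midpoint :
    ¬ MultiAttackerFeasible (!₂[4, 0] : ℝ²) !₂[9/2, 0] 0 (3/4) (1/2)
      ((2:ℝ)⁻¹ • ((!₂[4, 3], 0) + (!₂[4, -3], 0))) := by
  have hmid : (2:ℝ)⁻¹ • (((!₂[4, 3] : ℝ²), (0 : ℝ²)) + (!₂[4, -3], 0)) = (!₂[4, 0], 0) := by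
    simp only [Prod.mk_add_mk, ← WithLp.toLp_add, Matrix.cons_add_cons, Matrix.empty_add_empty,
      add_neg_cancel, add_zero, Prod.smul_mk, ← WithLp.toLp_smul, Matrix.smul_cons, smul_eq_mul,
      mul_zero, Matrix.smul_empty, smul_zero]
    norm_num
  rw [hmid, multiAttackerFeasible_mk_zero_iff, EuclideanSpace.norm_vec2_eq (r := 4) (by norm_num)
    (by norm_num), EuclideanSpace.norm_vec2_eq (r := 9/2) (by norm_num) (by norm_num)]
  norm_num

theorem multi_attacker_feasible_set_not_convex :
    ∃ (a₁ a₂ d : EuclideanSpace ℝ (Fin 2)) (ν₁ ν₂ : ℝ),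
      ν₁ ∈ Set.Ioo (0:ℝ) 1 ∧ ν₂ ∈ Set.Ioo (0:ℝ) 1 ∧
      ∃ P Q : EuclideanSpace ℝ (Fin 2) × EuclideanSpace ℝ (Fin 2),
        (‖P.1 - a₁‖ / ν₁ ≤ ‖P.1 - d‖ ∧ ‖P.2 - a₂‖ / ν₂ ≤ ‖P.1 - d‖ + ‖P.2 - P.1‖) ∧
        (‖Q.1 - a₁‖ / ν₁ ≤ ‖Q.1 - d‖ ∧ ‖Q.2 - a₂‖ / ν₂ ≤ ‖Q.1 - d‖ + ‖Q.2 - Q.1‖) ∧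
        ¬ (‖(2:ℝ)⁻¹ • (P.1 + Q.1) - a₁‖ / ν₁ ≤ ‖(2:ℝ)⁻¹ • (P.1 + Q.1) - d‖ ∧
           ‖(2:ℝ)⁻¹ • (P.2 + Q.2) - a₂‖ / ν₂ ≤
             ‖(2:ℝ)⁻¹ • (P.1 + Q.1) - d‖ + ‖(2:ℝ)⁻¹ • (P.2 + Q.2) - (2:ℝ)⁻¹ • (P.1 + Q.1)‖) := by
  exact ⟨!₂[4, 0], !₂[9/2, 0], 0, _, _, by norm_num, by norm_num, _, _,
    multiAttackerFeasible_of_sq_eq_nine (by norm_num), multiAttackerFeasible_of_sq_eq_nine (by norm_num),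
    not_multiAttackerFeasible_midpoint⟩
end
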